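/- For any discrete group G, ℓ∞(G)⋊_max G = ℓ∞(G)⋊_inj G, i.e. the maximal norm on C_c(G, ℓ∞(G)) coincides with the injective crossed product norm. -/

import Mathlib

open Function

/-- A point-norm continuous action of a topological group `G` on a (non-unital) C⋆-algebra `A`
by ⋆-automorphisms. -/
structure GAct (G : Type) [Monoid G] [TopologicalSpace G]
    (A : Type) [NonUnitalCStarAlgebra A] : Type where
  act : G → A → A
  act_one : ∀ a, act 1 a = a
  act_mul : ∀ g h a, act (g * h) a = act g (act h a)
  map_add : ∀ g a b, act g (a + b) = act g a + act g b
  map_smul : ∀ g (c : ℂ) a, act g (c • a) = c • act g a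
  map_mul : ∀ g a b, act g (a * b) = act g a * act g b
  map_star : ∀ g a, act g (star a) = star (act g a)
  isometry : ∀ g a, ‖act g a‖ = ‖a‖
  cont : ∀ a, Continuous fun g => act g a

section maps

variable {G : Type} [Monoid G] [TopologicalSpace G]
variable {A B : Type} [NonUnitalCStarAlgebra A] [NonUnitalCStarAlgebra B]

/-- A contractive completely positive (ccp) map between C⋆-algebras:
linear, contractive, and positive at all matrix levels (where an element of a
C⋆-algebra is positive iff it is of the form `star y * y`). -/
def IsCcp (φ : A → B) : Prop :=
  (∀ a b, φ (a + b) = φ a + φ b) ∧ (∀ (c : ℂ) (a : A), φ (c • a) = c • φ a) ∧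
  (∀ a, ‖φ a‖ ≤ ‖a‖) ∧
  ∀ (n : ℕ) (M : Matrix (Fin n) (Fin n) A),
    (∃ N : Matrix (Fin n) (Fin n) A, M = star N * N) →
      ∃ N' : Matrix (Fin n) (Fin n) B, M.map φ = star N' * N'

/-- A ⋆-homomorphism, as a predicate on functions. -/
def IsStarHom (φ : A → B) : Prop :=
  (∀ a b, φ (a + b) = φ a + φ b) ∧ (∀ (c : ℂ) (a : A), φ (c • a) = c • φ a) ∧
  (∀ a b, φ (a * b) = φ a * φ b) ∧ (∀ a, φ (star a) = star (φ a))

/-- Equivariance of a map with respect to given actions. -/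
def Equivariant (α : GAct G A) (β : GAct G B) (φ : A → B) : Prop :=
  ∀ g a, φ (α.act g a) = β.act g (φ a)

/-- A `G`-equivariant injective ⋆-homomorphism (an equivariant embedding). -/
def IsGEmbedding (α : GAct G A) (β : GAct G B) (φ : A → B) : Prop :=
  IsStarHom φ ∧ Injective φ ∧ Equivariant α β φ

/-- A map `φ : A → B` is `G`-injective if it extends to an equivariant ccp map along every
equivariant embedding of `A` into another `G`-C⋆-algebra. -/
def GInjectiveMap (α : GAct G A) (β : GAct G B) (φ : A → B) : Prop :=
  ∀ (C : Type) (_ : NonUnitalCStarAlgebra C) (γ : GAct G C) (ι : A → C),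
    IsGEmbedding α γ ι →
    ∃ ψ : C → B, IsCcp ψ ∧ Equivariant γ β ψ ∧ ψ ∘ ι = φ

/-- A `G`-C⋆-algebra `B` is `G`-injective if every equivariant ccp map into it is
`G`-injective. -/
def GInjectiveAlg (β : GAct G B) : Prop :=
  ∀ (A' : Type) (_ : NonUnitalCStarAlgebra A') (α : GAct G A') (φ : A' → B),
    IsCcp φ → Equivariant α β φ → GInjectiveMap α β φ

/-- Membership in the algebraic crossed product `C_c(G,A)`: continuous compactly
supported `A`-valued functions on `G`. -/
def CcFun (f : G → A) : Prop :=
  Continuous f ∧ HasCompactSupport f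

end maps

section norms

variable (G : Type) [Monoid G] [TopologicalSpace G]

/-- The type of assignments of a crossed-product norm (such as `‖·‖_max` or `‖·‖_r`) to every
`G`-C⋆-algebra; the norm is recorded as a function on all of `G → A`, thought of as restricted
to `C_c(G,A)`. -/
abbrev CPNorm : Type 1 :=
  ∀ (A : Type) [_inst : NonUnitalCStarAlgebra A], GAct G A → (G → A) → ℝ

variable {G}

/-- Functoriality of a crossed-product norm assignment for equivariant ccp maps:
an equivariant ccp map `ψ` induces a contraction on crossed products.  This is the
characteristic property of the maximal crossed product (functoriality for ccp maps)
which is used throughout the construction of the maximal injective crossed product. -/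
def CcpFunctorial (N : CPNorm G) : Prop :=
  ∀ (A : Type) (_ : NonUnitalCStarAlgebra A) (B : Type) (_ : NonUnitalCStarAlgebra B)
    (α : GAct G A) (β : GAct G B) (ψ : A → B), IsCcp ψ → Equivariant α β ψ →
    ∀ f : G → A, CcFun f → N B β (ψ ∘ f) ≤ N A α f

/-- The injective crossed-product norm associated to a given (maximal) crossed-product
norm assignment: the infimum over all equivariant embeddings `ι : A → B` of the norm of
the image of `f ∈ C_c(G,A)` in `B ⋊_max G`. -/
noncomputable def injNorm (maxN : CPNorm G) (A : Type) [NonUnitalCStarAlgebra A]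
    (α : GAct G A) (f : G → A) : ℝ :=
  sInf { r : ℝ | ∃ (B : Type) (_ : NonUnitalCStarAlgebra B) (β : GAct G B) (ι : A → B),
    IsGEmbedding α β ι ∧ r = maxN B β (ι ∘ f) }

end norms

/-!
If `ι : ℓ∞(G) → C` is an equivariant embedding, evaluation at the identity extends through `ι`
(Hahn–Banach, in the unitization) to a state `φ` of `C`, and the Poisson transform
`c ↦ (g ↦ φ (g⁻¹ • c))` is an equivariant left inverse of `ι`. It is ccp because states are
positive, so that at every point of `G` its matrix amplifications are positive semidefinite, and a
matrix over `ℓ∞(G)` that is pointwise positive semidefinite is of the form `star N * N`. Hence the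
identity of `ℓ∞(G)` is `G`-injective, and by ccp-functoriality of the maximal norm the infimum
defining the injective norm is attained at `ι = id`.
-/

open Complex Matrix BoundedContinuousFunction
open scoped ComplexOrder

section StarHoms

variable {A B : Type} [NonUnitalCStarAlgebra A] [NonUnitalCStarAlgebra B]

def IsStarHom.toNonUnitalStarAlgHom {φ : A → B} (hφ : IsStarHom φ) : A →⋆ₙₐ[ℂ] B where
  toFun := φ
  map_smul' := hφ.2.1
  map_zero' := by simpa using hφ.2.1 0 0
  map_add' := hφ.1
  map_mul' := hφ.2.2.1
  map_star' := hφ.2.2.2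

def GAct.toNonUnitalStarAlgHom {G : Type} [Monoid G] [TopologicalSpace G] (α : GAct G A) (g : G) :
    A →⋆ₙₐ[ℂ] A :=
  IsStarHom.toNonUnitalStarAlgHom ⟨α.map_add g, α.map_smul g, α.map_mul g, α.map_star g⟩

open scoped CStarAlgebra in
lemma CcFun.comp_isStarHom {G : Type} [TopologicalSpace G] {f : G → A} (hf : CcFun f) {ι : A → B}
    (hι : IsStarHom ι) : CcFun (ι ∘ f) :=
  ⟨(map_continuous hι.toNonUnitalStarAlgHom).comp hf.1,
    hf.2.comp_left (map_zero hι.toNonUnitalStarAlgHom)⟩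

end StarHoms

section InjectiveNorm

variable {G : Type} [Monoid G] [TopologicalSpace G]
variable {A : Type} [NonUnitalCStarAlgebra A]

lemma isGEmbedding_id (α : GAct G A) : IsGEmbedding α α id :=
  ⟨⟨fun _ _ => rfl, fun _ _ => rfl, fun _ _ => rfl, fun _ => rfl⟩, injective_id, fun _ _ => rfl⟩

lemma maxN_eq_injNorm_of_gInjectiveMap_id {maxN : CPNorm G} (hmax : CcpFunctorial maxN)
    {α : GAct G A} (hα : GInjectiveMap α α id) {f : G → A} (hf : CcFun f) :
    maxN A α f = injNorm maxN A α f := by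
  refine (IsLeast.csInf_eq ?_).symm
  refine ⟨⟨A, _, α, id, isGEmbedding_id α, rfl⟩, ?_⟩
  rintro _ ⟨B, _, β, ι, hι, rfl⟩
  obtain ⟨ψ, hψ, hψ_eqv, hψι⟩ := hα B _ β ι hι
  simpa [← Function.comp_assoc, hψι] using hmax B _ A _ β α ψ hψ hψ_eqv _ (hf.comp_isStarHom hι.1)

end InjectiveNorm

namespace ContinuousLinearMap

variable {D : Type*} [CStarAlgebra D] {φ : StrongDual ℂ D}

lemma im_apply_eq_zero_of_isSelfAdjoint (hφ : ‖φ‖ ≤ 1) (h1 : φ 1 = 1) {x : D}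
    (hx : IsSelfAdjoint x) : (φ x).im = 0 := by
  have : Nontrivial D := nontrivial_of_ne 1 0 fun h => by simp [h] at h1
  -- test `φ` against `x + i s`, whose norm is at most `√(‖x‖² + s²)`
  have hbound (s : ℝ) : 2 * s * (φ x).im ≤ ‖x‖ ^ 2 := by
    set y := x + ((s : ℂ) * I) • (1 : D)
    have hy : star y * y = x * x + ((s : ℂ) ^ 2) • 1 := by
      have hc : star ((s : ℂ) * I) = -((s : ℂ) * I) := by simp
      have hcc : (s : ℂ) * I * ((s : ℂ) * I) = -(s : ℂ) ^ 2 := by ring_nf; simp [I_sq]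
      simp only [y, star_add, hx.star_eq, star_smul, star_one, hc, add_mul, mul_add, neg_smul,
        neg_mul, smul_mul_assoc, mul_smul_comm, one_mul, mul_one, smul_add, smul_neg, smul_smul,
        hcc]
      abel
    have hy_norm : ‖y‖ ^ 2 ≤ ‖x‖ ^ 2 + s ^ 2 := by
      rw [sq, ← CStarRing.norm_star_mul_self, hy]
      calc ‖x * x + ((s : ℂ) ^ 2) • (1 : D)‖ ≤ ‖x‖ * ‖x‖ + s ^ 2 := by
            refine (norm_add_le _ _).trans (add_le_add (norm_mul_le x x) ?_)
            simp [norm_smul]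
        _ = ‖x‖ ^ 2 + s ^ 2 := by ring
    have hφy : φ y = φ x + s * I := by simp [y, h1]
    have hφy_le : ‖φ y‖ ≤ ‖y‖ := (φ.le_of_opNorm_le hφ y).trans_eq (one_mul _)
    have him : |(φ x).im + s| ≤ ‖φ y‖ := by
      simpa [hφy] using abs_im_le_norm (φ y)
    have hsq : ((φ x).im + s) ^ 2 ≤ ‖x‖ ^ 2 + s ^ 2 := by
      rw [← sq_abs]
      exact (pow_le_pow_left₀ (abs_nonneg _) (him.trans hφy_le) 2).trans hy_norm
    nlinarith [sq_nonneg (φ x).im]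
  by_contra h
  have := hbound ((‖x‖ ^ 2 + 1) / (2 * (φ x).im))
  rw [mul_comm 2, mul_assoc, div_mul_cancel₀ _ (by simpa using h)] at this
  linarith

variable [PartialOrder D] [StarOrderedRing D]

lemma apply_nonneg_of_nonneg (hφ : ‖φ‖ ≤ 1) (h1 : φ 1 = 1) {x : D} (hx : 0 ≤ x) : 0 ≤ φ x := by
  have him := im_apply_eq_zero_of_isSelfAdjoint hφ h1 (.of_nonneg hx)
  -- `‖x‖ - x` lies between `0` and `‖x‖`, so `‖x‖ - φ x = φ (‖x‖ - x)` has modulus at most `‖x‖`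
  set y := algebraMap ℝ D ‖x‖ - x
  have hy : ‖y‖ ≤ ‖x‖ := by
    rw [CStarAlgebra.norm_le_iff_le_algebraMap y (norm_nonneg x)
      (sub_nonneg.mpr (IsSelfAdjoint.of_nonneg hx).le_algebraMap_norm_self)]
    exact sub_le_self _ hx
  have hφy : φ y = ((‖x‖ - (φ x).re : ℝ) : ℂ) := by
    rw [map_sub, Algebra.algebraMap_eq_smul_one, φ.map_smul_of_tower, h1]
    apply Complex.ext <;> simp [him]
  have := (φ.le_of_opNorm_le hφ y).trans ((one_mul _).trans_le hy)
  rw [hφy, norm_real, Real.norm_eq_abs, abs_le] at this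
  exact Complex.nonneg_iff.mpr ⟨by linarith [this.1], him.symm⟩

end ContinuousLinearMap

lemma PositiveLinearMap.posSemidef_map_star_mul_self {A : Type*} [NonUnitalCStarAlgebra A]
    [PartialOrder A] [StarOrderedRing A] (f : A →ₚ[ℂ] ℂ) {n : Type*} [Fintype n]
    (N : Matrix n n A) : ((star N * N).map f).PosSemidef := by
  rw [Matrix.posSemidef_iff_dotProduct_mulVec]
  refine ⟨?_, fun x => ?_⟩
  · rw [Matrix.star_eq_conjTranspose]
    exact (Matrix.isHermitian_conjTranspose_mul_self N).map f fun a => map_star f a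
  · have hquad : star x ⬝ᵥ ((star N * N).map f *ᵥ x) =
        f (∑ k, star (∑ j, x j • N k j) * ∑ j, x j • N k j) := by
      simp only [dotProduct, Matrix.mulVec, Matrix.map_apply, Matrix.mul_apply, star_sum,
        Finset.sum_mul, Finset.mul_sum, star_smul, smul_mul_smul_comm, map_sum, map_smul,
        Matrix.star_apply, Pi.star_apply, smul_eq_mul]
      conv_lhs => enter [2, j]; rw [Finset.sum_comm]
      rw [Finset.sum_comm]
      refine Finset.sum_congr rfl fun k _ => ?_
      rw [Finset.sum_comm]
      refine Finset.sum_congr rfl fun i _ => Finset.sum_congr rfl fun j _ => ?_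
      ring
    rw [hquad]
    exact f.map_nonneg (Finset.sum_nonneg fun k _ => star_mul_self_nonneg _)

open scoped MatrixOrder in
lemma Matrix.PosSemidef.exists_eq_conjTranspose_mul_self {n : Type*} [Fintype n] [DecidableEq n]
    {A : Matrix n n ℂ} (hA : A.PosSemidef) : ∃ B : Matrix n n ℂ, A = Bᴴ * B := by
  obtain ⟨B, hB, -, rfl⟩ := CFC.exists_sqrt_of_isSelfAdjoint_of_quasispectrumRestricts
    hA.isHermitian (QuasispectrumRestricts.nnreal_of_nonneg hA.nonneg)
  exact ⟨B, by rw [← Matrix.star_eq_conjTranspose, hB.star_eq]⟩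

lemma Matrix.norm_sq_le_re_conjTranspose_mul_self_apply {m n : Type*} [Fintype m]
    (B : Matrix m n ℂ) (k : m) (i : n) : ‖B k i‖ ^ 2 ≤ ((Bᴴ * B) i i).re := by
  have hdiag : ((Bᴴ * B) i i).re = ∑ l, ‖B l i‖ ^ 2 := by
    simp [Matrix.mul_apply, Complex.re_sum, ← Complex.normSq_eq_norm_sq, Complex.normSq_apply]
  rw [hdiag]
  exact Finset.single_le_sum (f := fun l => ‖B l i‖ ^ 2) (fun _ _ => sq_nonneg _)
    (Finset.mem_univ k)

/-- The pointwise square roots are bounded by the diagonal of `M`, hence lie in `ℓ∞(X)`. -/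
lemma BoundedContinuousFunction.exists_matrix_eq_star_mul_self {X : Type*} [TopologicalSpace X]
    [DiscreteTopology X] {n : Type*} [Fintype n] [DecidableEq n] (M : Matrix n n (X →ᵇ ℂ))
    (hM : ∀ x, (M.map fun f => f x).PosSemidef) : ∃ N : Matrix n n (X →ᵇ ℂ), M = star N * N := by
  choose Q hQ using fun x => (hM x).exists_eq_conjTranspose_mul_self
  have hQ_le (x : X) (k i : n) : ‖Q x k i‖ ≤ √‖M i i‖ := by
    refine Real.le_sqrt_of_sq_le ?_
    calc ‖Q x k i‖ ^ 2 ≤ (((Q x)ᴴ * Q x) i i).re :=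
          (Q x).norm_sq_le_re_conjTranspose_mul_self_apply k i
      _ = (M i i x).re := by rw [← hQ x, Matrix.map_apply]
      _ ≤ ‖M i i‖ := (Complex.re_le_norm _).trans ((M i i).norm_coe_le_norm x)
  refine ⟨Matrix.of fun k i => .ofNormedAddCommGroup (fun x => Q x k i)
    continuous_of_discreteTopology _ fun x => hQ_le x k i, ?_⟩
  ext i j x
  have := congr_fun₂ (hQ x) i j
  simp only [Matrix.map_apply] at this
  simp [this, Matrix.mul_apply]

lemma LinearIsometry.exists_extension_norm_eq {𝕜 E F : Type*} [RCLike 𝕜] [NormedAddCommGroup E]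
    [NormedSpace 𝕜 E] [NormedAddCommGroup F] [NormedSpace 𝕜 F] (e : E →ₗᵢ[𝕜] F)
    (f : StrongDual 𝕜 E) : ∃ g : StrongDual 𝕜 F, ‖g‖ = ‖f‖ ∧ ∀ x, g (e x) = f x := by
  obtain ⟨g, hg, hg_norm⟩ := _root_.exists_extension_norm_eq _
    (f.comp e.equivRange.symm.toContinuousLinearEquiv.toContinuousLinearMap)
  refine ⟨g, hg_norm.trans (f.opNorm_comp_linearIsometryEquiv _), fun x => ?_⟩
  simpa using hg (e.equivRange x)

/-- Extending in the unitizations, where `ι` is still isometric, makes the Hahn–Banach extension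
unital, hence a state. -/
lemma exists_state_extension {A C : Type*} [NonUnitalCStarAlgebra A] [NonUnitalCStarAlgebra C]
    (ω : A →⋆ₙₐ[ℂ] ℂ) (ι : A →⋆ₙₐ[ℂ] C) (hι : Injective ι) :
    ∃ φ : StrongDual ℂ (Unitization ℂ C), ‖φ‖ ≤ 1 ∧ φ 1 = 1 ∧ ∀ a, φ (ι a) = ω a := by
  let Θ := Unitization.starMap ι
  let e : Unitization ℂ A →ₗᵢ[ℂ] Unitization ℂ C := Θ.toLinearMap.toLinearIsometry
    (NonUnitalStarAlgHom.isometry Θ (Unitization.starMap_injective hι))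
  let ρ : StrongDual ℂ (Unitization ℂ A) := (Unitization.starLift ω).toLinearMap.mkContinuous 1
    fun s => (NonUnitalStarAlgHom.norm_apply_le (Unitization.starLift ω) s).trans_eq
      (one_mul _).symm
  obtain ⟨φ, hφ_norm, hφ⟩ := e.exists_extension_norm_eq ρ
  refine ⟨φ, hφ_norm ▸ ρ.mkContinuous_norm_le zero_le_one _, ?_, fun a => ?_⟩
  · have h : φ (Θ 1) = Unitization.starLift ω 1 := hφ 1
    simpa using h
  · rw [← Unitization.starMap_inr, ← DFunLike.congr_fun (Unitization.starLift.symm_apply_apply ω) a]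
    exact hφ a

section PoissonTransform

variable {G : Type} [Group G] [TopologicalSpace G] [DiscreteTopology G]
variable {C : Type} [NonUnitalCStarAlgebra C] (γ : GAct G C) (φ : StrongDual ℂ (Unitization ℂ C))

noncomputable def poissonTransform (c : C) : G →ᵇ ℂ :=
  .ofNormedAddCommGroup (fun g => φ (γ.act g⁻¹ c)) continuous_of_discreteTopology (‖φ‖ * ‖c‖)
    fun g => (φ.le_opNorm _).trans_eq (by rw [Unitization.norm_inr, γ.isometry])

@[simp]
lemma poissonTransform_apply (c : C) (g : G) : poissonTransform γ φ c g = φ (γ.act g⁻¹ c) := rfl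

lemma equivariant_poissonTransform (β : GAct G (G →ᵇ ℂ))
    (hβ : ∀ g f h, (β.act g f) h = f (g⁻¹ * h)) : Equivariant γ β (poissonTransform γ φ) := by
  intro h c
  ext g
  rw [hβ, poissonTransform_apply, poissonTransform_apply, ← γ.act_mul, _root_.mul_inv_rev, inv_inv]

lemma poissonTransform_leftInverse (β : GAct G (G →ᵇ ℂ))
    (hβ : ∀ g f h, (β.act g f) h = f (g⁻¹ * h)) {ι : (G →ᵇ ℂ) → C} (hι : Equivariant β γ ι)
    (hφι : ∀ b, φ (ι b) = b 1) : LeftInverse (poissonTransform γ φ) ι := by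
  intro b
  ext g
  rw [poissonTransform_apply, ← hι, hφι, hβ, inv_inv, mul_one]

lemma isCcp_poissonTransform (hφ : ‖φ‖ ≤ 1) (h1 : φ 1 = 1) : IsCcp (poissonTransform γ φ) := by
  refine ⟨fun a b => ?_, fun c a => ?_, fun c => ?_, ?_⟩
  · ext g
    simp [γ.map_add]
  · ext g
    simp [γ.map_smul]
  · refine (BoundedContinuousFunction.norm_le (norm_nonneg c)).mpr fun g => ?_
    refine (φ.le_of_opNorm_le hφ _).trans ?_
    rw [one_mul, Unitization.norm_inr, γ.isometry]
  · rintro n M ⟨N, rfl⟩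
    let _ : PartialOrder (Unitization ℂ C) := CStarAlgebra.spectralOrder _
    have _ : StarOrderedRing (Unitization ℂ C) := CStarAlgebra.spectralOrderedRing _
    let f : Unitization ℂ C →ₚ[ℂ] ℂ :=
      .mk₀ φ.toLinearMap fun _ hx => φ.apply_nonneg_of_nonneg hφ h1 hx
    refine BoundedContinuousFunction.exists_matrix_eq_star_mul_self _ fun g => ?_
    let h := (Unitization.inrNonUnitalStarAlgHom ℂ C).comp (γ.toNonUnitalStarAlgHom g⁻¹)
    have hg : ((star N * N).map (poissonTransform γ φ)).map (fun b => b g) =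
        (star (N.map h) * N.map h).map f := by
      rw [Matrix.star_eq_conjTranspose, Matrix.star_eq_conjTranspose,
        ← Matrix.conjTranspose_map _ (map_star h), ← Matrix.map_mul]
      rfl
    rw [hg]
    exact f.posSemidef_map_star_mul_self _

end PoissonTransform

lemma gInjectiveMap_id_of_translation {G : Type} [Group G] [TopologicalSpace G]
    [DiscreteTopology G] (β : GAct G (G →ᵇ ℂ)) (hβ : ∀ g f h, (β.act g f) h = f (g⁻¹ * h)) :
    GInjectiveMap β β id := by
  rintro C _ γ ι ⟨hι_hom, hι_inj, hι_eqv⟩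
  let ω : (G →ᵇ ℂ) →⋆ₙₐ[ℂ] ℂ :=
    { toFun := fun b => b 1
      map_smul' := fun _ _ => rfl
      map_zero' := rfl
      map_add' := fun _ _ => rfl
      map_mul' := fun _ _ => rfl
      map_star' := fun _ => rfl }
  obtain ⟨φ, hφ, h1, hφι⟩ := exists_state_extension ω hι_hom.toNonUnitalStarAlgHom hι_inj
  exact ⟨poissonTransform γ φ, isCcp_poissonTransform γ φ hφ h1,
    equivariant_poissonTransform γ φ β hβ,
    funext (poissonTransform_leftInverse γ φ β hβ hι_eqv hφι)⟩

theorem linfty_maxNorm_eq_injNorm_general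
    {G : Type} [Group G] [TopologicalSpace G] [DiscreteTopology G]
    (maxN : CPNorm G) (hmax : CcpFunctorial maxN)
    (β : GAct G (BoundedContinuousFunction G ℂ))
    (hβ : ∀ (g : G) (f : BoundedContinuousFunction G ℂ) (h : G),
      (β.act g f) h = f (g⁻¹ * h)) :
    ∀ f : G → BoundedContinuousFunction G ℂ, CcFun f →
      maxN (BoundedContinuousFunction G ℂ) β f =
        injNorm maxN (BoundedContinuousFunction G ℂ) β f :=
  fun _ hf => maxN_eq_injNorm_of_gInjectiveMap_id hmax (gInjectiveMap_id_of_translation β hβ) hf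

/-- For any discrete group `G`, the maximal and injective crossed-product
norms on `C_c(G, ℓ∞(G))` coincide, where `ℓ∞(G)` (the bounded functions on `G`, realized as
`G →ᵇ ℂ` for discrete `G`) carries the left translation action:
`ℓ∞(G) ⋊_max G = ℓ∞(G) ⋊_inj G`. -/
theorem linfty_maxNorm_eq_injNorm
    {G : Type} [Group G] [TopologicalSpace G] [IsTopologicalGroup G] [DiscreteTopology G]
    (maxN : CPNorm G) (hmax : CcpFunctorial maxN)
    (β : GAct G (BoundedContinuousFunction G ℂ))
    (hβ : ∀ (g : G) (f : BoundedContinuousFunction G ℂ) (h : G),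
      (β.act g f) h = f (g⁻¹ * h)) :
    ∀ f : G → BoundedContinuousFunction G ℂ, CcFun f →
      maxN (BoundedContinuousFunction G ℂ) β f =
        injNorm maxN (BoundedContinuousFunction G ℂ) β f :=
  linfty_maxNorm_eq_injNorm_general maxN hmax β hβ
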